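/- For α > 2 and fixed s > 0, the function F(r) = exp(−2πλ·∫_r^∞ x·s/(1+x^α+s) dx) is nondecreasing in r on [0, ∞), with F(0) = exp(−(2π²λ/α)s(1+s)^{2/α−1}csc(2π/α)) and lim_{r→∞} F(r) = 1. -/

import Mathlib

open MeasureTheory Real Filter Set

-- Step A: beta in (0,1) form
lemma beta01 {a : ℝ} (ha : 0 < a) (ha1 : a < 1) :
    ∫ t in Ioo (0:ℝ) 1, t ^ (a - 1) * (1 - t) ^ (-a) = π / Real.sin (π * a) := by
  have h1 : 0 < Complex.re (a : ℂ) := by simpa using ha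
  have h2 : 0 < Complex.re (1 - (a:ℂ)) := by simp; linarith
  have hβ : Complex.betaIntegral a (1 - a) = ↑π / Complex.sin (π * a) := by
    have := Complex.Gamma_mul_Gamma_eq_betaIntegral h1 h2
    rw [add_sub_cancel, Complex.Gamma_one, one_mul] at this
    rw [← this, Complex.Gamma_mul_Gamma_one_sub]
  have key : Complex.betaIntegral a (1 - a)
      = ((∫ t in (0:ℝ)..1, t ^ (a - 1) * (1 - t) ^ (-a) : ℝ) : ℂ) := by
    rw [Complex.betaIntegral, ← intervalIntegral.integral_ofReal]
    refine intervalIntegral.integral_congr fun x hx => ?_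
    rw [Set.uIcc_of_le zero_le_one] at hx
    have e1 : ((a:ℂ) - 1) = ((a - 1 : ℝ) : ℂ) := by push_cast; ring
    have e2 : (1 - (a:ℂ) - 1) = ((-a : ℝ) : ℂ) := by push_cast; ring
    have e3 : (1 - (x:ℂ)) = ((1 - x : ℝ) : ℂ) := by push_cast; ring
    rw [e1, e2, e3, ← Complex.ofReal_cpow hx.1,
      ← Complex.ofReal_cpow (by linarith [hx.2] : (0:ℝ) ≤ 1 - x), ← Complex.ofReal_mul]
  have hreal : (∫ t in (0:ℝ)..1, t ^ (a - 1) * (1 - t) ^ (-a)) = π / Real.sin (π * a) := by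
    have : ((∫ t in (0:ℝ)..1, t ^ (a - 1) * (1 - t) ^ (-a) : ℝ) : ℂ)
        = ((π / Real.sin (π * a) : ℝ) : ℂ) := by
      rw [← key, hβ]; push_cast [Complex.ofReal_sin]; ring_nf
    exact_mod_cast this
  rw [← hreal, intervalIntegral.integral_of_le zero_le_one,
    integral_Ioc_eq_integral_Ioo]

-- Step B: beta integral on Ioi 0 form
lemma betaIoi {a : ℝ} (ha : 0 < a) (ha1 : a < 1) :
    ∫ u in Ioi (0:ℝ), u ^ (a - 1) / (1 + u) = π / Real.sin (π * a) := by
  have hd : ∀ u ∈ Ioi (0:ℝ),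
      HasDerivWithinAt (fun u : ℝ => u / (1 + u)) (1 / (1 + u) ^ 2) (Ioi 0) u := by
    intro u hu
    have h1u : (1:ℝ) + u ≠ 0 := by simp at hu; positivity
    have := (hasDerivAt_id u).div ((hasDerivAt_const u (1:ℝ)).add (hasDerivAt_id u)) h1u
    refine (show HasDerivAt (fun u : ℝ => u / (1 + u)) ((1 * (1 + u) - u * (0 + 1)) / (1 + u) ^ 2) u from this).hasDerivWithinAt.congr_deriv ?_
    ring
  have hinj : Set.InjOn (fun u : ℝ => u / (1 + u)) (Ioi 0) := by
    intro x hx y hy h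
    simp only [mem_Ioi] at hx hy
    have hx1 : (1:ℝ) + x ≠ 0 := by positivity
    have hy1 : (1:ℝ) + y ≠ 0 := by positivity
    field_simp at h
    linarith
  have himg : (fun u : ℝ => u / (1 + u)) '' Ioi 0 = Ioo 0 1 := by
    ext t
    constructor
    · rintro ⟨u, hu, rfl⟩
      simp only [mem_Ioi] at hu
      constructor
      · positivity
      · rw [div_lt_one (by positivity)]; linarith
    · rintro ⟨ht0, ht1⟩
      have h1t0 : (0:ℝ) < 1 - t := by linarith
      refine ⟨t / (1 - t), by simp only [mem_Ioi]; positivity, ?_⟩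
      have h1t : (1:ℝ) - t ≠ 0 := by linarith [ht1]
      field_simp
      ring
  have := integral_image_eq_integral_abs_deriv_smul measurableSet_Ioi hd hinj
    (fun t => t ^ (a - 1) * (1 - t) ^ (-a))
  rw [himg, beta01 ha ha1] at this
  rw [this]
  refine setIntegral_congr_fun measurableSet_Ioi fun u hu => ?_
  simp only [mem_Ioi] at hu
  have h1u : (0:ℝ) < 1 + u := by positivity
  have e1 : (1:ℝ) - u / (1 + u) = (1 + u)⁻¹ := by field_simp; ring
  have e2 : ((1:ℝ)+u) ^ a = (1+u) ^ (a-1) * (1+u) := by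
    rw [show a = (a-1)+1 by ring, Real.rpow_add_one h1u.ne']; ring_nf
  rw [smul_eq_mul, e1, Real.div_rpow hu.le h1u.le, abs_of_pos (by positivity),
    Real.inv_rpow h1u.le, ← Real.rpow_neg h1u.le, neg_neg, e2]
  have hne : ((1:ℝ)+u) ^ (a-1) ≠ 0 := (Real.rpow_pos_of_pos h1u _).ne'
  field_simp

lemma integ_main {α s : ℝ} (hα : 2 < α) (hs : 0 < s) :
    IntegrableOn (fun x : ℝ => x * s / (1 + x ^ α + s)) (Ioi 0) := by
  have hcont : ContinuousOn (fun x : ℝ => x * s / (1 + x ^ α + s)) (Ioi 0) := by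
    refine ContinuousOn.div (continuousOn_id.mul continuousOn_const)
      ((continuousOn_const.add (continuousOn_id.rpow_const fun x hx =>
        Or.inl (ne_of_gt hx))).add continuousOn_const) fun x hx => ?_
    have : (0:ℝ) ≤ x ^ α := Real.rpow_nonneg (le_of_lt hx) α
    positivity
  rw [← Ioc_union_Ioi_eq_Ioi (zero_le_one' ℝ)]
  refine IntegrableOn.union ?_ ?_
  · refine Integrable.mono' (integrable_const s)
      ((hcont.mono Ioc_subset_Ioi_self).aestronglyMeasurable measurableSet_Ioc) ?_
    refine (ae_restrict_iff' measurableSet_Ioc).mpr (ae_of_all _ fun x hx => ?_)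
    obtain ⟨hx0, hx1⟩ := hx
    have hxa : (0:ℝ) ≤ x ^ α := Real.rpow_nonneg hx0.le α
    have hd : (1:ℝ) ≤ 1 + x ^ α + s := by linarith
    rw [Real.norm_eq_abs, abs_of_nonneg (by positivity)]
    calc x * s / (1 + x ^ α + s) ≤ x * s / 1 := by
          apply div_le_div_of_nonneg_left (by positivity) one_pos hd
      _ = x * s := by ring
      _ ≤ 1 * s := by nlinarith
      _ = s := one_mul s
  · refine Integrable.mono'
      ((integrableOn_Ioi_rpow_of_lt (by linarith : 1 - α < -1) one_pos).const_mul s)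
      ((hcont.mono (Ioi_subset_Ioi zero_le_one)).aestronglyMeasurable measurableSet_Ioi) ?_
    refine (ae_restrict_iff' measurableSet_Ioi).mpr (ae_of_all _ fun x hx => ?_)
    simp only [mem_Ioi] at hx
    have hx0 : (0:ℝ) < x := by linarith
    have hxa : (0:ℝ) < x ^ α := Real.rpow_pos_of_pos hx0 α
    rw [Real.norm_eq_abs, abs_of_nonneg (by positivity)]
    calc x * s / (1 + x ^ α + s) ≤ x * s / x ^ α := by
          apply div_le_div_of_nonneg_left (by positivity) hxa (by linarith)
      _ = s * x ^ (1 - α) := by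
          rw [Real.rpow_sub hx0, Real.rpow_one]; ring

lemma integral_val {α s : ℝ} (hα : 2 < α) (hs : 0 < s) :
    ∫ x in Ioi (0:ℝ), x * s / (1 + x ^ α + s)
      = π / α * s * (1 + s) ^ (2 / α - 1) * (1 / Real.sin (π * (2 / α))) := by
  have hα0 : (0:ℝ) < α := by linarith
  have ha : (0:ℝ) < 2 / α := by positivity
  have ha1 : 2 / α < 1 := by rw [div_lt_one hα0]; linarith
  have h1s : (0:ℝ) < 1 + s := by linarith
  -- substitution y = x ^ α
  have step1 : ∫ x in Ioi (0:ℝ), x * s / (1 + x ^ α + s)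
      = ∫ y in Ioi (0:ℝ), s / α * y ^ (2 / α - 1) / (1 + y + s) := by
    rw [← integral_comp_rpow_Ioi_of_pos (g := fun y => s / α * y ^ (2 / α - 1) / (1 + y + s)) hα0]
    refine setIntegral_congr_fun measurableSet_Ioi fun x hx => ?_
    simp only [mem_Ioi] at hx
    have hD : (0:ℝ) < 1 + x ^ α + s := by
      have : (0:ℝ) ≤ x ^ α := Real.rpow_nonneg hx.le α
      positivity
    have e : α * (2 / α - 1) = 2 - α := by field_simp
    have e2 : x ^ (α - 1) * x ^ (2 - α) = x := by
      rw [← Real.rpow_add hx]; norm_num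
    rw [smul_eq_mul, ← Real.rpow_mul hx.le, e]
    field_simp
    linear_combination (-1 : ℝ) * e2
  rw [step1]
  have sub := integral_comp_mul_left_Ioi (fun y => s / α * y ^ (2 / α - 1) / (1 + y + s)) 0 h1s
  rw [mul_zero, smul_eq_mul] at sub
  have congr1 : ∫ x in Ioi (0:ℝ), s / α * ((1 + s) * x) ^ (2 / α - 1) / (1 + (1 + s) * x + s)
      = ∫ x in Ioi (0:ℝ), (s / α * (1 + s) ^ (2 / α - 1) * (1 + s)⁻¹) * (x ^ (2 / α - 1) / (1 + x)) := by
    refine setIntegral_congr_fun measurableSet_Ioi fun x hx => ?_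
    simp only [mem_Ioi] at hx
    have h1x : (0:ℝ) < 1 + x := by linarith
    rw [Real.mul_rpow h1s.le hx.le, show 1 + (1 + s) * x + s = (1 + s) * (1 + x) by ring]
    field_simp
  have final : ∫ y in Ioi (0:ℝ), s / α * y ^ (2 / α - 1) / (1 + y + s)
      = (1 + s) * ((s / α * (1 + s) ^ (2 / α - 1) * (1 + s)⁻¹)
          * ∫ x in Ioi (0:ℝ), x ^ (2 / α - 1) / (1 + x)) := by
    rw [← MeasureTheory.integral_const_mul, ← congr1, sub]
    field_simp
  rw [final, betaIoi ha ha1]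
  have hsin : Real.sin (π * (2 / α)) ≠ 0 := by
    apply Real.sin_pos_of_pos_of_lt_pi (by positivity) ?_ |>.ne'
    calc π * (2 / α) < π * 1 := by
          apply mul_lt_mul_of_pos_left ha1 Real.pi_pos
      _ = π := mul_one π
  have hcancel : (1 + s) * (1 + s)⁻¹ = 1 := mul_inv_cancel₀ h1s.ne'
  calc (1 + s) * (s / α * (1 + s) ^ (2 / α - 1) * (1 + s)⁻¹ * (π / Real.sin (π * (2 / α))))
      = ((1 + s) * (1 + s)⁻¹) * (s / α * (1 + s) ^ (2 / α - 1) * (π / Real.sin (π * (2 / α)))) := by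
        ring
    _ = π / α * s * (1 + s) ^ (2 / α - 1) * (1 / Real.sin (π * (2 / α))) := by
        rw [hcancel]; ring

theorem laplace_transform_tail_interference_monotone
    (lam α s : ℝ) (hlam : 0 < lam) (hα : 2 < α) (hs : 0 < s) :
    MonotoneOn (fun r : ℝ =>
        Real.exp (-(2 * π * lam) * ∫ x in Set.Ioi r, x * s / (1 + x ^ α + s)))
      (Set.Ici 0)
    ∧ Real.exp (-(2 * π * lam) * ∫ x in Set.Ioi (0:ℝ), x * s / (1 + x ^ α + s))
        = Real.exp (-(2 * π ^ 2 * lam / α) * s * (1 + s) ^ (2 / α - 1)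
            * (1 / Real.sin (2 * π / α)))
    ∧ Tendsto (fun r : ℝ =>
        Real.exp (-(2 * π * lam) * ∫ x in Set.Ioi r, x * s / (1 + x ^ α + s)))
      atTop (nhds 1) := by
  have hint := integ_main hα hs
  have hnn : ∀ x : ℝ, 0 < x → 0 ≤ x * s / (1 + x ^ α + s) := by
    intro x hx
    have : (0:ℝ) ≤ x ^ α := Real.rpow_nonneg hx.le α
    positivity
  refine ⟨?_, ?_, ?_⟩
  · intro r1 hr1 r2 hr2 h12
    simp only [mem_Ici] at hr1 hr2
    apply Real.exp_le_exp.mpr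
    have hIle : (∫ x in Ioi r2, x * s / (1 + x ^ α + s))
        ≤ ∫ x in Ioi r1, x * s / (1 + x ^ α + s) := by
      refine setIntegral_mono_set (hint.mono_set (Ioi_subset_Ioi hr1)) ?_
        ((Ioi_subset_Ioi h12).eventuallyLE)
      refine (ae_restrict_iff' measurableSet_Ioi).mpr (ae_of_all _ fun x hx => ?_)
      exact hnn x (lt_of_le_of_lt hr1 hx)
    have hc : (0:ℝ) ≤ 2 * π * lam := by positivity
    nlinarith
  · rw [integral_val hα hs]
    congr 1
    rw [show π * (2 / α) = 2 * π / α by ring]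
    ring
  · have key : Tendsto (fun r : ℝ => ∫ x in Ioi r, x * s / (1 + x ^ α + s))
        atTop (nhds 0) := by
      have h1 := intervalIntegral_tendsto_integral_Ioi 0 hint tendsto_id
      have h2 : Tendsto (fun r : ℝ => (∫ x in Ioi (0:ℝ), x * s / (1 + x ^ α + s))
          - ∫ x in (0:ℝ)..r, x * s / (1 + x ^ α + s)) atTop (nhds 0) := by
        have := (tendsto_const_nhds (x := ∫ x in Ioi (0:ℝ), x * s / (1 + x ^ α + s))
          (f := atTop (α := ℝ))).sub h1
        simpa using this
      refine h2.congr' ?_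
      filter_upwards [eventually_ge_atTop (0:ℝ)] with r hr
      have hsplit : (∫ x in Ioi (0:ℝ), x * s / (1 + x ^ α + s))
          = (∫ x in Ioc 0 r, x * s / (1 + x ^ α + s))
            + ∫ x in Ioi r, x * s / (1 + x ^ α + s) := by
        rw [← setIntegral_union (Ioc_disjoint_Ioi le_rfl) measurableSet_Ioi
          (hint.mono_set Ioc_subset_Ioi_self) (hint.mono_set (Ioi_subset_Ioi hr)),
          Ioc_union_Ioi_eq_Ioi hr]
      rw [intervalIntegral.integral_of_le hr, hsplit]
      ring
    have hc := key.const_mul (-(2 * π * lam))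
    rw [mul_zero] at hc
    have := (Real.continuous_exp.tendsto 0).comp hc
    simpa [Function.comp_def] using this
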